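/- Let κ be a cardinal with uncountable cofinality, X ⊆ [ω]^ω such that X ∪ Fin is κ-concentrated on Fin, and let (𝒰_n)_{n∈ω} be a sequence of open covers of X ∪ Fin (as a subspace of P(ω)). Then there exist a set A ⊆ X with |A| < κ and, for every n, a member U_n ∈ 𝒰_n such that for all x ∈ (X ∖ A) ∪ Fin the set {n : x ∈ U_n} is infinite. -/

import Mathlib

open Set Cardinal

/-- The finite subsets of ω, as a subset of Cantor space `ℕ → Bool`. -/
def FinS : Set (ℕ → Bool) := {x | {n | x n = true}.Finite}

/-!
Enumerate the countable set `Fin` and choose the selections `U_n` so that each of its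
points is covered along an infinite set of indices. The tails
`W_m = ⋃_{n ≥ m} U_n` are then open sets containing `Fin`, so by concentration only fewer
than `κ` points of `X ∪ Fin` miss any given `W_m`; since `cf κ > ω`, fewer than `κ` points
miss some `W_m`, and these form `A`. Every other point lies in all `W_m`, i.e. in
infinitely many `U_n`.
-/

universe u

theorem Cardinal.mk_iUnion_lt_of_lt_cof_ord {ι α : Type u} {κ : Cardinal.{u}} (hκ : ℵ₀ ≤ κ)
    (hι : #ι < κ.ord.cof) {S : ι → Set α} (hS : ∀ i, #(S i) < κ) : #(⋃ i, S i) < κ :=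
  mk_iUnion_le_sum_mk.trans_lt <| (sum_le_mk_mul_iSup _).trans_lt <|
    mul_lt_of_lt hκ (hι.trans_le (Ordinal.cof_ord_le κ)) (iSup_lt_of_lt_cof_ord hι hS)

theorem Set.mem_iInter_iUnion_ge_iff_infinite {α : Type*} {U : ℕ → Set α} {x : α} :
    x ∈ ⋂ m, ⋃ n ≥ m, U n ↔ {n | x ∈ U n}.Infinite := by
  simp only [mem_iInter, mem_iUnion, exists_prop, ← Nat.frequently_atTop_iff_infinite,
    Filter.frequently_atTop]

theorem Set.Countable.exists_forall_infinite_setOf_mem {α : Type*} {D : Set α}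
    (hD : D.Countable) (hne : D.Nonempty) {𝒰 : ℕ → Set (Set α)} (hcov : ∀ n, D ⊆ ⋃₀ 𝒰 n) :
    ∃ U : ℕ → Set α, (∀ n, U n ∈ 𝒰 n) ∧ ∀ d ∈ D, {n | d ∈ U n}.Infinite := by
  obtain ⟨e, rfl⟩ := hD.exists_eq_range hne
  choose V hV𝒰 hmemV using fun n k => hcov n (mem_range_self k)
  refine ⟨fun n => V n n.unpair.1, fun n => hV𝒰 _ _, ?_⟩
  rintro _ ⟨k, rfl⟩
  refine infinite_of_injective_forall_mem (f := Nat.pair k)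
    (fun _ _ h => (Nat.pair_eq_pair.1 h).2) ?_
  intro j
  simpa only [mem_ofPred_eq, Nat.unpair_pair] using hmemV (Nat.pair k j) k

theorem countable_finS : FinS.Countable := by
  refine (countable_range fun s : Finset ℕ => fun n => decide (n ∈ s)).mono ?_
  intro x (hx : {n | x n = true}.Finite)
  exact ⟨hx.toFinset, funext fun n => by simp⟩

theorem stmt7_general (κ : Cardinal) (hκ : Cardinal.aleph0 < κ.ord.cof)
    (X : Set (ℕ → Bool))
    (hconc : κ ≤ Cardinal.mk ↥(X ∪ FinS) ∧
      ∀ U : Set (ℕ → Bool), IsOpen U → FinS ⊆ U →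
        Cardinal.mk ↥((X ∪ FinS) \ U) < κ)
    (𝒰 : ℕ → Set (Set (ℕ → Bool)))
    (hcov : ∀ n, (∀ V ∈ 𝒰 n, IsOpen V) ∧ X ∪ FinS ⊆ ⋃₀ 𝒰 n) :
    ∃ A ⊆ X, Cardinal.mk A < κ ∧
      ∃ U : ℕ → Set (ℕ → Bool), (∀ n, U n ∈ 𝒰 n) ∧
        ∀ x ∈ (X \ A) ∪ FinS, {n | x ∈ U n}.Infinite := by
  obtain ⟨U, hU𝒰, hUFin⟩ := countable_finS.exists_forall_infinite_setOf_mem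
    ⟨fun _ => false, by simp [FinS]⟩ fun n => subset_union_right.trans (hcov n).2
  set W : ℕ → Set (ℕ → Bool) := fun m => ⋃ n ≥ m, U n
  have hW_open (m : ℕ) : IsOpen (W m) := isOpen_biUnion fun n _ => (hcov n).1 _ (hU𝒰 n)
  have hFinS_W (m : ℕ) : FinS ⊆ W m := fun x hx =>
    mem_iInter.1 (mem_iInter_iUnion_ge_iff_infinite.2 (hUFin x hx)) m
  have hA : X \ ⋂ m, W m ⊆ ⋃ m, (X ∪ FinS) \ W m := by
    rw [sdiff_iInter]
    exact iUnion_mono fun m => sdiff_subset_sdiff_left subset_union_left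
  refine ⟨X \ ⋂ m, W m, sdiff_subset, ?_, U, hU𝒰, ?_⟩
  · have hℕ : #ℕ < κ.ord.cof := by rwa [mk_nat]
    exact (mk_le_mk_of_subset hA).trans_lt <| mk_iUnion_lt_of_lt_cof_ord
      (hκ.le.trans (Ordinal.cof_ord_le κ)) hℕ fun m => hconc.2 _ (hW_open m) (hFinS_W m)
  · rintro x (⟨hxX, hxA⟩ | hxFinS)
    · exact mem_iInter_iUnion_ge_iff_infinite.1 (by_contra fun hxW => hxA ⟨hxX, hxW⟩)
    · exact hUFin x hxFinS

/-- if `X ∪ Fin` is κ-concentrated on `Fin` (κ of uncountable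
cofinality) and `(𝒰_n)` is a sequence of open covers of `X ∪ Fin`, then there are
`A ⊆ X` with `|A| < κ` and selections `U_n ∈ 𝒰_n` such that every
`x ∈ (X ∖ A) ∪ Fin` belongs to infinitely many `U_n`. -/
theorem stmt7 (κ : Cardinal) (hκ : Cardinal.aleph0 < κ.ord.cof)
    (X : Set (ℕ → Bool)) (hX : ∀ x ∈ X, {n | x n = true}.Infinite)
    (hconc : κ ≤ Cardinal.mk ↥(X ∪ FinS) ∧
      ∀ U : Set (ℕ → Bool), IsOpen U → FinS ⊆ U →
        Cardinal.mk ↥((X ∪ FinS) \ U) < κ)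
    (𝒰 : ℕ → Set (Set (ℕ → Bool)))
    (hcov : ∀ n, (∀ V ∈ 𝒰 n, IsOpen V) ∧ X ∪ FinS ⊆ ⋃₀ 𝒰 n) :
    ∃ A ⊆ X, Cardinal.mk A < κ ∧
      ∃ U : ℕ → Set (ℕ → Bool), (∀ n, U n ∈ 𝒰 n) ∧
        ∀ x ∈ (X \ A) ∪ FinS, {n | x ∈ U n}.Infinite :=
  stmt7_general κ hκ X hconc 𝒰 hcov
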